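/- arXiv:2101.11207 — 5 statements merged into one kernel-verified Lean document; each statement's English description precedes it below -/
import Mathlib

section
/- For a standard Gaussian vector w = (w_1, ..., w_d) in R^d, the i-th largest value among |w_1|, ..., |w_d| has second moment E[(w_i^≻)^2] ≤ C·log(2d/i) for an absolute constant C and all 1 ≤ i ≤ d. -/
/-!
Since `y ≤ 4 e^{y/4}`, for every `a` we have `v² ≤ a + 4 e^{-a/4} e^{v²/4}`, where `v` is the
`i`-th largest `|w_j|` (counting `i` from `1`). At least `i` of the `|w_j|` are `≥ v`, so
`i e^{v²/4} ≤ ∑_j e^{w_j²/4}`, whose expectation is `d √2`. Choosing `a = 4 log (2d/i)` gives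
`E[v²] ≤ 4 log (2d/i) + 2√2 ≤ 9 log (2d/i)`, as `log (2d/i) ≥ log 2`.
-/

open MeasureTheory ProbabilityTheory

/-- The decreasing rearrangement of a tuple of reals: `descRearr f i` is the
`i`-th largest value among the `f j`. -/
noncomputable def descRearr {d : ℕ} (f : Fin d → ℝ) : Fin d → ℝ :=
  fun i => (f ∘ Tuple.sort f) i.rev

open Real Finset
open scoped NNReal

lemma integrable_gaussianReal_iff_integrable_smul {E : Type*} [NormedAddCommGroup E]
    [NormedSpace ℝ E] {μ : ℝ} {v : ℝ≥0} {f : ℝ → E} (hv : v ≠ 0) :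
    Integrable f (gaussianReal μ v) ↔ Integrable (fun x => gaussianPDFReal μ v x • f x) := by
  rw [gaussianReal_of_var_ne_zero _ hv, integrable_withDensity_iff_integrable_smul'
    (measurable_gaussianPDF _ _) (ae_of_all _ fun _ => gaussianPDF_lt_top)]
  simp only [toReal_gaussianPDF]

lemma gaussianPDFReal_mul_exp_mul_sq (t x : ℝ) :
    gaussianPDFReal 0 1 x * exp (t * x ^ 2) = (√(2 * π))⁻¹ * exp (-(1 / 2 - t) * x ^ 2) := by
  rw [gaussianPDFReal, mul_assoc, ← exp_add]
  simp only [NNReal.coe_one, mul_one, sub_zero]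
  ring_nf

lemma integrable_exp_mul_sq_gaussianReal {t : ℝ} (ht : t < 1 / 2) :
    Integrable (fun x => exp (t * x ^ 2)) (gaussianReal 0 1) := by
  rw [integrable_gaussianReal_iff_integrable_smul one_ne_zero]
  simp only [smul_eq_mul, gaussianPDFReal_mul_exp_mul_sq]
  exact (integrable_exp_neg_mul_sq (by linarith)).const_mul _

/-- For `t ≥ 1/2` both sides are junk values `0`. -/
lemma integral_exp_mul_sq_gaussianReal (t : ℝ) :
    ∫ x, exp (t * x ^ 2) ∂gaussianReal 0 1 = (√(1 - 2 * t))⁻¹ := by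
  rw [integral_gaussianReal_eq_integral_smul one_ne_zero]
  simp only [smul_eq_mul, gaussianPDFReal_mul_exp_mul_sq]
  rw [integral_const_mul, integral_gaussian, ← sqrt_inv, ← sqrt_mul (by positivity), ← sqrt_inv]
  congr 1
  field_simp

section
variable {ι X : Type*} [Fintype ι] [MeasurableSpace X] {ν : Measure X} {f : X → ℝ}

lemma integrable_sum_comp_eval [IsFiniteMeasure ν] (hf : Integrable f ν) :
    Integrable (fun x : ι → X => ∑ j, f (x j)) (Measure.pi fun _ => ν) :=
  integrable_finsetSum _ fun _ _ => integrable_comp_eval (X := fun _ => X) hf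

lemma integral_sum_comp_eval [IsProbabilityMeasure ν] (hf : Integrable f ν) :
    ∫ x : ι → X, ∑ j, f (x j) ∂(Measure.pi fun _ => ν) = Fintype.card ι * ∫ y, f y ∂ν := by
  rw [integral_finsetSum _ fun _ _ => integrable_comp_eval (X := fun _ => X) hf]
  simp only [integral_comp_eval (X := fun _ => X) (μ := fun _ => ν) hf.aestronglyMeasurable,
    sum_const, card_univ, nsmul_eq_mul]
end

lemma le_mul_exp_div {c : ℝ} (hc : 0 < c) (y : ℝ) : y ≤ c * exp (y / c) := by
  have h : y = c * (y / c) := by field_simp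
  nlinarith [add_one_le_exp (y / c), exp_pos (y / c)]

lemma succ_mul_apply_descRearr_le_sum {d : ℕ} (f : Fin d → ℝ) (i : Fin d) {g : ℝ → ℝ}
    (hg : MonotoneOn g (Set.range f)) (hg₀ : ∀ j, 0 ≤ g (f j)) :
    ((i : ℕ) + 1) * g (descRearr f i) ≤ ∑ j, g (f j) := by
  set σ := Tuple.sort f
  calc ((i : ℕ) + 1) * g (descRearr f i) = ∑ _j ∈ Ici i.rev, g (f (σ i.rev)) := by
        rw [sum_const, Fin.card_Ici, Fin.val_rev, nsmul_eq_mul]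
        push_cast [Nat.sub_sub_self (Nat.succ_le_of_lt i.isLt)]
        rfl
    _ ≤ ∑ j ∈ Ici i.rev, g (f (σ j)) := sum_le_sum fun j hj =>
        hg ⟨_, rfl⟩ ⟨_, rfl⟩ (Tuple.monotone_sort f (mem_Ici.mp hj))
    _ ≤ ∑ j, g (f (σ j)) := sum_le_sum_of_subset_of_nonneg (subset_univ _) fun j _ _ => hg₀ _
    _ = ∑ j, g (f j) := Equiv.sum_comp σ (g ∘ f)

lemma sq_descRearr_abs_le {d : ℕ} (w : Fin d → ℝ) (i : Fin d) (a : ℝ) :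
    descRearr (fun j => |w j|) i ^ 2
      ≤ a + 4 * exp (-a / 4) / ((i : ℕ) + 1) * ∑ j, exp (w j ^ 2 / 4) := by
  set v := descRearr (fun j => |w j|) i
  have hcount : ((i : ℕ) + 1) * exp (v ^ 2 / 4) ≤ ∑ j, exp (w j ^ 2 / 4) := by
    have hmono : MonotoneOn (fun x => exp (x ^ 2 / 4)) (Set.range fun j => |w j|) := by
      rintro _ ⟨j, rfl⟩ _ ⟨k, rfl⟩ hjk
      dsimp only
      gcongr
    simpa only [sq_abs] using
      succ_mul_apply_descRearr_le_sum _ i hmono fun _ => (exp_pos _).le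
  calc v ^ 2 ≤ a + 4 * exp ((v ^ 2 - a) / 4) := by linarith [le_mul_exp_div four_pos (v ^ 2 - a)]
    _ = a + 4 * exp (-a / 4) / ((i : ℕ) + 1) * (((i : ℕ) + 1) * exp (v ^ 2 / 4)) := by
        rw [sub_div, sub_eq_neg_add, neg_div, exp_add]
        field_simp
    _ ≤ _ := by gcongr

lemma integral_sq_descRearr_abs_le {d : ℕ} (i : Fin d) (a : ℝ) :
    ∫ w : Fin d → ℝ, descRearr (fun j => |w j|) i ^ 2
        ∂(Measure.pi fun _ : Fin d => gaussianReal 0 1)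
      ≤ a + 4 * exp (-a / 4) / ((i : ℕ) + 1) * (d * √2) := by
  have hint : Integrable (fun x => exp (x ^ 2 / 4)) (gaussianReal 0 1) := by
    simpa only [div_eq_inv_mul _ (4 : ℝ)] using
      integrable_exp_mul_sq_gaussianReal (t := 4⁻¹) (by norm_num)
  have hmgf : ∫ x, exp (x ^ 2 / 4) ∂gaussianReal 0 1 = √2 := by
    simp_rw [div_eq_inv_mul _ (4 : ℝ), integral_exp_mul_sq_gaussianReal, ← sqrt_inv]
    norm_num
  have hsum := integrable_sum_comp_eval (ι := Fin d) hint
  calc _ ≤ ∫ w : Fin d → ℝ, (a + 4 * exp (-a / 4) / ((i : ℕ) + 1) * ∑ j, exp (w j ^ 2 / 4))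
          ∂(Measure.pi fun _ : Fin d => gaussianReal 0 1) :=
        integral_mono_of_nonneg (ae_of_all _ fun _ => sq_nonneg _)
          ((integrable_const a).add (hsum.const_mul _))
          (ae_of_all _ fun w => sq_descRearr_abs_le w i a)
    _ = a + 4 * exp (-a / 4) / ((i : ℕ) + 1) * (d * √2) := by
        rw [integral_add (integrable_const a) (hsum.const_mul _), integral_const,
          integral_const_mul, integral_sum_comp_eval hint, hmgf, probReal_univ, one_smul,
          Fintype.card_fin]

/-- For a standard Gaussian vector `w` in `ℝ^d`, the `i`-th largest value among
`|w 1|, …, |w d|` has second moment at most `C · log(2d/i)`. -/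
theorem stmt0 :
    ∃ C : ℝ, 0 < C ∧ ∀ (d : ℕ), 0 < d → ∀ i : Fin d,
      ∫ w : Fin d → ℝ, (descRearr (fun j => |w j|) i) ^ 2
          ∂(Measure.pi fun _ : Fin d => gaussianReal 0 1)
        ≤ C * Real.log (2 * d / ((i : ℕ) + 1)) := by
  refine ⟨9, by norm_num, fun d hd i => ?_⟩
  set L := log (2 * d / ((i : ℕ) + 1))
  have hi : ((i : ℕ) + 1 : ℝ) ≤ d := by exact_mod_cast i.isLt
  have hratio : 0 < 2 * d / ((i : ℕ) + 1 : ℝ) := by positivity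
  have hL : log 2 ≤ L := log_le_log two_pos <| by rw [le_div_iff₀ (by positivity)]; linarith
  have hexp : exp (-(4 * L) / 4) = ((i : ℕ) + 1) / (2 * d) := by
    rw [neg_div, mul_div_cancel_left₀ _ four_ne_zero, exp_neg, exp_log hratio, inv_div]
  have hsqrt2 : √2 < 3 / 2 := by rw [sqrt_lt' (by norm_num)]; norm_num
  calc _ ≤ 4 * L + 4 * exp (-(4 * L) / 4) / ((i : ℕ) + 1) * (d * √2) :=
        integral_sq_descRearr_abs_le i (4 * L)
    _ = 4 * L + 2 * √2 := by rw [hexp]; field_simp; ring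
    _ ≤ 9 * L := by linarith [log_two_gt_d9]
end

section
/- For vectors v_1, ..., v_m in C^d and any unit vector w ∈ C^d, one has ∑_{i=1}^m |⟨w, v_i⟩|^2 ≤ max_{i ∈ [m]} ∑_{j=1}^m |⟨v_i, v_j⟩| (Selberg's inequality). -/
/-!
Put `u = ∑ j, conj ⟪w, v j⟫ • v j`, so that `⟪w, u⟫ = S := ∑ j, |⟪w, v j⟫|²` and hence
`S ≤ ‖w‖ ‖u‖`. Expanding `‖u‖²` and bounding `|c i| |c j| ≤ (|c i|² + |c j|²) / 2`, where
`c j = ⟪w, v j⟫`, against the symmetric weights `|⟪v i, v j⟫|` gives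
`‖u‖² ≤ S · max_i ∑ j |⟪v i, v j⟫|`; combining the two bounds yields
`S ≤ ‖w‖² · max_i ∑ j |⟪v i, v j⟫|`.
-/

open Finset
open scoped InnerProductSpace

theorem sum_sum_mul_mul_le_of_symm {ι : Type*} [Fintype ι] (a : ι → ι → ℝ) (x : ι → ℝ)
    (ha : ∀ i j, 0 ≤ a i j) (ha_symm : ∀ i j, a i j = a j i) :
    ∑ i, ∑ j, x i * x j * a i j ≤ ∑ i, x i ^ 2 * ∑ j, a i j := by
  have amgm : ∀ i j, x i * x j * a i j ≤ (x i ^ 2 * a i j + x j ^ 2 * a j i) / 2 := fun i j => by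
    rw [ha_symm j i]
    nlinarith [mul_nonneg (sq_nonneg (x i - x j)) (ha i j)]
  calc ∑ i, ∑ j, x i * x j * a i j
      ≤ ∑ i, ∑ j, (x i ^ 2 * a i j + x j ^ 2 * a j i) / 2 := by gcongr with i _ j _; exact amgm i j
    _ = (∑ i, ∑ j, x i ^ 2 * a i j + ∑ i, ∑ j, x j ^ 2 * a j i) / 2 := by
        simp only [← sum_add_distrib, sum_div]
    _ = ∑ i, x i ^ 2 * ∑ j, a i j := by
        rw [sum_comm (s := univ) (t := univ) (f := fun i j => x j ^ 2 * a j i), add_self_div_two]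
        simp only [mul_sum]

section

variable {𝕜 E ι : Type*} [RCLike 𝕜] [NormedAddCommGroup E] [InnerProductSpace 𝕜 E] [Fintype ι]

theorem norm_sum_smul_sq_le (c : ι → 𝕜) (v : ι → E) :
    ‖∑ j, c j • v j‖ ^ 2 ≤ ∑ i, ‖c i‖ ^ 2 * ∑ j, ‖⟪v i, v j⟫_𝕜‖ := by
  set u := ∑ j, c j • v j
  have expand : ⟪u, u⟫_𝕜 = ∑ i, ∑ j, starRingEnd 𝕜 (c i) * c j * ⟪v i, v j⟫_𝕜 := by
    rw [sum_inner]
    refine sum_congr rfl fun i _ => ?_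
    rw [inner_smul_left, inner_sum, mul_sum]
    refine sum_congr rfl fun j _ => ?_
    rw [inner_smul_right, mul_assoc]
  calc ‖u‖ ^ 2 = RCLike.re ⟪u, u⟫_𝕜 := (@norm_sq_eq_re_inner 𝕜 _ _ _ _ u)
    _ ≤ ‖⟪u, u⟫_𝕜‖ := RCLike.re_le_norm _
    _ ≤ ∑ i, ∑ j, ‖c i‖ * ‖c j‖ * ‖⟪v i, v j⟫_𝕜‖ := by
        rw [expand]
        refine (norm_sum_le _ _).trans (sum_le_sum fun i _ => (norm_sum_le _ _).trans_eq ?_)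
        simp only [norm_mul, RCLike.norm_conj]
    _ ≤ ∑ i, ‖c i‖ ^ 2 * ∑ j, ‖⟪v i, v j⟫_𝕜‖ :=
        sum_sum_mul_mul_le_of_symm _ _ (fun _ _ => norm_nonneg _)
          (fun i j => by rw [← inner_conj_symm, RCLike.norm_conj])

theorem sum_norm_inner_sq_le [Nonempty ι] (v : ι → E) (w : E) {M : ℝ}
    (hM : ∀ i, ∑ j, ‖⟪v i, v j⟫_𝕜‖ ≤ M) :
    ∑ j, ‖⟪w, v j⟫_𝕜‖ ^ 2 ≤ ‖w‖ ^ 2 * M := by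
  set S := ∑ j, ‖⟪w, v j⟫_𝕜‖ ^ 2
  set u := ∑ j, starRingEnd 𝕜 ⟪w, v j⟫_𝕜 • v j
  have hS : 0 ≤ S := by positivity
  have hM0 : 0 ≤ M := (sum_nonneg fun _ _ => norm_nonneg _).trans (hM (Classical.arbitrary ι))
  have inner_w_u : ⟪w, u⟫_𝕜 = S := by
    simp only [u, S, inner_sum, inner_smul_right, RCLike.conj_mul]
    push_cast; rfl
  have hSu : S ≤ ‖w‖ * ‖u‖ := by
    calc S = ‖⟪w, u⟫_𝕜‖ := by rw [inner_w_u, RCLike.norm_ofReal, abs_of_nonneg hS]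
      _ ≤ ‖w‖ * ‖u‖ := norm_inner_le_norm w u
  have hu : ‖u‖ ^ 2 ≤ S * M := by
    refine (norm_sum_smul_sq_le _ v).trans ?_
    rw [sum_mul]
    gcongr with j
    · rw [RCLike.norm_conj]
    · exact hM j
  have hS_sq : S ^ 2 ≤ ‖w‖ ^ 2 * (S * M) := by
    calc S ^ 2 ≤ (‖w‖ * ‖u‖) ^ 2 := by gcongr
      _ = ‖w‖ ^ 2 * ‖u‖ ^ 2 := mul_pow _ _ _
      _ ≤ ‖w‖ ^ 2 * (S * M) := by gcongr
  nlinarith [hS_sq, mul_nonneg (sq_nonneg ‖w‖) hM0]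

end

/-- Selberg's inequality: for vectors `v 1, …, v m` in `ℂ^d` and any unit vector `w`,
`∑ i |⟨w, v i⟩|² ≤ max_i ∑ j |⟨v i, v j⟩|` (the maximum being witnessed by some `i`). -/
theorem stmt1 (d m : ℕ) (hm : 0 < m) (v : Fin m → EuclideanSpace ℂ (Fin d))
    (w : EuclideanSpace ℂ (Fin d)) (hw : ‖w‖ = 1) :
    ∃ i : Fin m,
      ∑ j : Fin m, ‖(inner ℂ w (v j) : ℂ)‖ ^ 2 ≤ ∑ j : Fin m, ‖(inner ℂ (v i) (v j) : ℂ)‖ := by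
  have : Nonempty (Fin m) := ⟨⟨0, hm⟩⟩
  obtain ⟨i, hi⟩ := Finite.exists_max fun i => ∑ j, ‖(inner ℂ (v i) (v j) : ℂ)‖
  exact ⟨i, by simpa [hw] using sum_norm_inner_sq_le v w hi⟩
end

section
/- Let k ≤ 2^i and suppose u ∈ R^{2^i} (viewed inside R^d via the first 2^i coordinates) is a unit vector satisfying ∑_{j∈S} u_j^2 ≤ C/(log(2^{i+1}/|S|))^4 for all nonempty S ⊆ [2^i]. If w is any unit vector supported on the first 2^j coordinates with j ≤ i, then |⟨u^≻, w^≻⟩| ≤ C'/(log(2^{i+1}/2^j))^2, where x^≻ denotes the decreasing rearrangement of the absolute values of the coordinates of x. -/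
open Finset

lemma exists_perm_descRearr_eq {d : ℕ} (f : Fin d → ℝ) :
    ∃ σ : Equiv.Perm (Fin d), ∀ l, descRearr f l = f (σ l) :=
  ⟨Fin.revPerm.trans (Tuple.sort f), fun _ => rfl⟩

lemma card_filter_ne_zero_le {d n : ℕ} {w : Fin d → ℝ} (hw : ∀ l : Fin d, n ≤ (l : ℕ) → w l = 0) :
    #{l | w l ≠ 0} ≤ n := by
  calc #{l | w l ≠ 0} ≤ #(range n) :=
        card_le_card_of_injOn Fin.val
          (fun l hl => mem_range.mpr (by_contra fun h => (mem_filter.mp hl).2 (hw l (not_lt.mp h))))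
          Fin.val_injective.injOn
    _ = n := card_range n

/-- Cauchy–Schwarz on the support of `w ∘ τ`. -/
lemma sum_abs_perm_mul_abs_perm_le {ι : Type*} [Fintype ι] (u w : ι → ℝ) (σ τ : Equiv.Perm ι)
    {m : ℕ} {B : ℝ} (hu : ∀ S : Finset ι, #S ≤ m → ∑ l ∈ S, u l ^ 2 ≤ B)
    (hw : #{l | w l ≠ 0} ≤ m) :
    ∑ l, |u (σ l)| * |w (τ l)| ≤ √B * √(∑ l, w l ^ 2) := by
  classical
  set T : Finset ι := {l | w (τ l) ≠ 0}
  have hT : #T = #{l | w l ≠ 0} :=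
    card_bij (fun l _ => τ l) (by simp [T]) (fun _ _ _ _ h => τ.injective h)
      (fun l hl => ⟨τ.symm l, by simpa [T] using hl, by simp⟩)
  have hsum : ∑ l, |u (σ l)| * |w (τ l)| = ∑ l ∈ T, |u (σ l)| * |w (τ l)| :=
    (sum_filter_of_ne fun l _ h => by simpa using right_ne_zero_of_mul h).symm
  have hu_T : ∑ l ∈ T, |u (σ l)| ^ 2 ≤ B := by
    simpa [sq_abs, sum_map] using hu (T.map σ.toEmbedding) (by simpa [hT] using hw)
  have hw_T : ∑ l ∈ T, |w (τ l)| ^ 2 ≤ ∑ l, w l ^ 2 := by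
    rw [← Equiv.sum_comp τ (fun l => w l ^ 2)]
    simpa only [sq_abs] using
      sum_le_sum_of_subset_of_nonneg (subset_univ T) fun l _ _ => sq_nonneg (w (τ l))
  rw [hsum]
  exact (Real.sum_mul_le_sqrt_mul_sqrt T _ _).trans
    (mul_le_mul (Real.sqrt_le_sqrt hu_T) (Real.sqrt_le_sqrt hw_T) (Real.sqrt_nonneg _)
      (Real.sqrt_nonneg _))

lemma div_log_div_pow_le {C a b m : ℝ} (hC : 0 ≤ C) (n : ℕ) (hab : 1 < a / b) (hm : 0 < m)
    (hmb : m ≤ b) : C / Real.log (a / m) ^ n ≤ C / Real.log (a / b) ^ n := by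
  have hb : 0 < b := hm.trans_le hmb
  have ha : 0 < a := by linarith [(one_lt_div hb).mp hab]
  have hlog : 0 < Real.log (a / b) := Real.log_pos hab
  have hlog_le : Real.log (a / b) ≤ Real.log (a / m) :=
    Real.log_le_log (by positivity) (div_le_div_of_nonneg_left ha.le hm hmb)
  exact div_le_div_of_nonneg_left hC (by positivity) (pow_le_pow_left₀ hlog.le hlog_le n)

lemma one_lt_two_pow_succ_div_two_pow {i j : ℕ} (hji : j ≤ i) :
    1 < (2 : ℝ) ^ (i + 1) / 2 ^ j :=
  (one_lt_div (by positivity)).mpr (pow_lt_pow_right₀ one_lt_two (by omega))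

lemma sum_sq_le_of_card_le {C : ℝ} (hC : 0 ≤ C) {d i j : ℕ} (hji : j ≤ i) {u : Fin d → ℝ}
    (hu : ∀ l : Fin d, 2 ^ i ≤ (l : ℕ) → u l = 0)
    (hdel : ∀ S : Finset (Fin d), S.Nonempty → (∀ l ∈ S, (l : ℕ) < 2 ^ i) →
      ∑ l ∈ S, u l ^ 2 ≤ C / (Real.log ((2 : ℝ) ^ (i + 1) / S.card)) ^ 4)
    (S : Finset (Fin d)) (hS : #S ≤ 2 ^ j) :
    ∑ l ∈ S, u l ^ 2 ≤ C / Real.log ((2 : ℝ) ^ (i + 1) / 2 ^ j) ^ 4 := by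
  set S₀ := S.filter fun l : Fin d => (l : ℕ) < 2 ^ i
  have hsum : ∑ l ∈ S, u l ^ 2 = ∑ l ∈ S₀, u l ^ 2 :=
    (sum_filter_of_ne fun l _ h => not_le.mp fun hl => h (by simp [hu l hl])).symm
  rw [hsum]
  rcases S₀.eq_empty_or_nonempty with hempty | hne
  · rw [hempty, sum_empty]
    positivity
  have hcard : (#S₀ : ℝ) ≤ 2 ^ j := by exact_mod_cast (card_filter_le _ _).trans hS
  exact (hdel S₀ hne fun l hl => (mem_filter.mp hl).2).trans
    (div_log_div_pow_le hC 4 (one_lt_two_pow_succ_div_two_pow hji)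
      (by exact_mod_cast hne.card_pos) hcard)

/-- If `u` is a unit vector supported on the first `2^i` coordinates satisfying the
delocalization bound `∑_{l∈S} u l² ≤ C/(log(2^{i+1}/|S|))⁴`, and `w` is a unit vector
supported on the first `2^j` coordinates with `j ≤ i`, then
`|⟨u^≻, w^≻⟩| ≤ C'/(log(2^{i+1}/2^j))²`. -/
theorem stmt6 (C : ℝ) (hC : 0 < C) :
    ∃ C' : ℝ, 0 < C' ∧
      ∀ (d i j k : ℕ), k ≤ 2 ^ i → j ≤ i → 2 ^ i ≤ d →
        ∀ u w : Fin d → ℝ,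
          (∀ l : Fin d, 2 ^ i ≤ (l : ℕ) → u l = 0) →
          Real.sqrt (∑ l : Fin d, u l ^ 2) = 1 →
          (∀ S : Finset (Fin d), S.Nonempty → (∀ l ∈ S, (l : ℕ) < 2 ^ i) →
            ∑ l ∈ S, u l ^ 2 ≤ C / (Real.log ((2 : ℝ) ^ (i + 1) / S.card)) ^ 4) →
          (∀ l : Fin d, 2 ^ j ≤ (l : ℕ) → w l = 0) →
          Real.sqrt (∑ l : Fin d, w l ^ 2) = 1 →
          |∑ l : Fin d, descRearr (fun m => |u m|) l * descRearr (fun m => |w m|) l|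
            ≤ C' / (Real.log ((2 : ℝ) ^ (i + 1) / 2 ^ j)) ^ 2 := by
  refine ⟨√C, Real.sqrt_pos.mpr hC, fun d i j _ _ hji _ u w hu _ hdel hw hw_norm => ?_⟩
  obtain ⟨σ, hσ⟩ := exists_perm_descRearr_eq fun m => |u m|
  obtain ⟨τ, hτ⟩ := exists_perm_descRearr_eq fun m => |w m|
  simp only [hσ, hτ]
  set L := Real.log ((2 : ℝ) ^ (i + 1) / 2 ^ j)
  have hL : 0 < L := Real.log_pos (one_lt_two_pow_succ_div_two_pow hji)
  have hbound := sum_abs_perm_mul_abs_perm_le u w σ τ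
    (sum_sq_le_of_card_le hC.le hji hu hdel) (card_filter_ne_zero_le hw)
  rw [abs_of_nonneg (sum_nonneg fun l _ => by positivity)]
  calc ∑ l, |u (σ l)| * |w (τ l)| ≤ √(C / L ^ 4) * √(∑ l, w l ^ 2) := hbound
    _ = √C / L ^ 2 := by
      rw [hw_norm, mul_one, Real.sqrt_div' C (by positivity),
        show L ^ 4 = (L ^ 2) ^ 2 by ring, Real.sqrt_sq (by positivity)]
end

section
/- Let Γ_d be the group of signed permutations acting on R^d (or the group S_d ⋉ (S^1)^d acting on C^d). For any subspace W ⊆ C^d and any v ∈ C^d, sup_{γ∈Γ_d} ‖proj_W(γ v)‖_2 = sup_{w ∈ S(W)} ⟨v^≻, w^≻⟩, where x^≻ denotes the vector of absolute values of coordinates of x sorted in decreasing order. -/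
/-!
Both sides equal the supremum of `‖⟪γ v, w⟫‖` over `γ ∈ Γ_d` and unit vectors `w ∈ W`.
For fixed `γ`, the supremum over `w` is `‖proj_W (γ v)‖`, attained at the normalized projection.
For fixed `w`, the triangle inequality and the rearrangement inequality give
`‖⟪γ v, w⟫‖ ≤ ∑ |v_{σ i}| |w_i| ≤ ⟨v^≻, w^≻⟩`, with equality for the permutation matching the
two decreasing orders and unit phases that make every term of the inner product nonnegative.
-/

open scoped InnerProductSpace ComplexConjugate

section Rearrangement

variable {d : ℕ}

lemma exists_perm_descRearr_eq_comp (f : Fin d → ℝ) :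
    ∃ e : Equiv.Perm (Fin d), descRearr f = f ∘ e :=
  ⟨Fin.revPerm.trans (Tuple.sort f), rfl⟩

lemma antitone_descRearr (f : Fin d → ℝ) : Antitone (descRearr f) :=
  fun _ _ hij => Tuple.monotone_sort f (Fin.rev_le_rev.2 hij)

lemma descRearr_comp_perm (f : Fin d → ℝ) (σ : Equiv.Perm (Fin d)) :
    descRearr (f ∘ σ) = descRearr f := by
  ext i
  exact congrFun Tuple.comp_perm_comp_sort_eq_comp_sort i.rev

lemma sum_mul_le_sum_descRearr_mul (a b : Fin d → ℝ) :
    ∑ i, a i * b i ≤ ∑ i, descRearr a i * descRearr b i := by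
  obtain ⟨ea, ha⟩ := exists_perm_descRearr_eq_comp a
  obtain ⟨eb, hb⟩ := exists_perm_descRearr_eq_comp b
  calc ∑ i, a i * b i = ∑ i, descRearr a ((eb.trans ea.symm) i) * descRearr b i := by
        rw [← Equiv.sum_comp eb]; simp [ha, hb]
    _ ≤ _ := ((antitone_descRearr a).monovary (antitone_descRearr b)).sum_comp_perm_mul_le_sum_mul

lemma exists_perm_sum_descRearr_mul_eq (a b : Fin d → ℝ) :
    ∃ σ : Equiv.Perm (Fin d), ∑ i, descRearr a i * descRearr b i = ∑ i, a (σ i) * b i := by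
  obtain ⟨ea, ha⟩ := exists_perm_descRearr_eq_comp a
  obtain ⟨eb, hb⟩ := exists_perm_descRearr_eq_comp b
  refine ⟨eb.symm.trans ea, ?_⟩
  rw [ha, hb, ← Equiv.sum_comp eb fun j => a ((eb.symm.trans ea) j) * b j]
  simp

end Rearrangement

lemma RCLike.exists_norm_eq_one_conj_mul_eq_norm {𝕜 : Type*} [RCLike 𝕜] (c : 𝕜) :
    ∃ u : 𝕜, ‖u‖ = 1 ∧ conj u * c = ‖c‖ := by
  rcases eq_or_ne c 0 with rfl | hc
  · exact ⟨1, by simp, by simp⟩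
  · refine ⟨c / ‖c‖, by simp [norm_div, hc], ?_⟩
    rw [map_div₀, RCLike.conj_ofReal, div_mul_eq_mul_div, RCLike.conj_mul]
    field_simp

namespace EuclideanSpace

variable {𝕜 ι : Type*} [RCLike 𝕜] [Fintype ι]

lemma norm_inner_le_sum_norm_mul_norm (x y : EuclideanSpace 𝕜 ι) :
    ‖⟪x, y⟫_𝕜‖ ≤ ∑ i, ‖x i‖ * ‖y i‖ := by
  rw [PiLp.inner_apply]
  refine (norm_sum_le _ _).trans_eq (Finset.sum_congr rfl fun i _ => ?_)
  rw [RCLike.inner_apply, norm_mul, RCLike.norm_conj, mul_comm]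

lemma exists_phases_inner_eq_sum_norm_mul_norm (x y : EuclideanSpace 𝕜 ι) :
    ∃ u : ι → 𝕜, (∀ i, ‖u i‖ = 1) ∧
      ⟪(WithLp.equiv 2 (ι → 𝕜)).symm fun i => u i * x i, y⟫_𝕜 =
        ((∑ i, ‖x i‖ * ‖y i‖ : ℝ) : 𝕜) := by
  choose u hu hconj using fun i => RCLike.exists_norm_eq_one_conj_mul_eq_norm (conj (x i) * y i)
  refine ⟨u, hu, ?_⟩
  rw [PiLp.inner_apply, RCLike.ofReal_sum]
  refine Finset.sum_congr rfl fun i _ => ?_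
  have h := hconj i
  rw [norm_mul, RCLike.norm_conj] at h
  change y i * conj (u i * x i) = _
  rw [map_mul, ← h]
  ring

end EuclideanSpace

namespace Submodule

variable {𝕜 E : Type*} [RCLike 𝕜] [NormedAddCommGroup E] [InnerProductSpace 𝕜 E]
  (K : Submodule 𝕜 E) [K.HasOrthogonalProjection]

lemma norm_inner_le_norm_orthogonalProjectionOnto_mul (x : E) {w : E} (hw : w ∈ K) :
    ‖⟪x, w⟫_𝕜‖ ≤ ‖K.orthogonalProjectionOnto x‖ * ‖w‖ := by
  rw [← K.inner_orthogonalProjectionOnto_eq_of_mem_right ⟨w, hw⟩]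
  exact norm_inner_le_norm _ _

lemma exists_norm_eq_one_norm_inner_eq_norm_orthogonalProjectionOnto (hK : K ≠ ⊥) (x : E) :
    ∃ w ∈ K, ‖w‖ = 1 ∧ ‖⟪x, w⟫_𝕜‖ = ‖K.orthogonalProjectionOnto x‖ := by
  set p := K.orthogonalProjectionOnto x
  suffices ∃ w : K, ‖w‖ = 1 ∧ ‖⟪p, w⟫_𝕜‖ = ‖p‖ by
    obtain ⟨w, hw, hpw⟩ := this
    exact ⟨w, w.2, hw, by rwa [← K.inner_orthogonalProjectionOnto_eq_of_mem_right]⟩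
  rcases eq_or_ne p 0 with hp | hp
  · have := Submodule.nontrivial_iff_ne_bot.2 hK
    obtain ⟨w, hw⟩ := exists_ne (0 : K)
    refine ⟨(‖w‖⁻¹ : 𝕜) • w, ?_, by simp [hp]⟩
    simp [norm_smul, hw]
  · refine ⟨(‖p‖⁻¹ : 𝕜) • p, by simp [norm_smul, hp], ?_⟩
    rw [inner_smul_right, inner_self_eq_norm_sq_to_K, norm_mul]
    simp only [norm_inv, RCLike.norm_ofReal, abs_norm, norm_pow]
    field_simp

end Submodule

section PhasePermutation

variable {𝕜 : Type*} [RCLike 𝕜] {d : ℕ}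

lemma norm_inner_le_sum_descRearr_mul (v w : EuclideanSpace 𝕜 (Fin d)) (σ : Equiv.Perm (Fin d))
    {u : Fin d → 𝕜} (hu : ∀ i, ‖u i‖ = 1) :
    ‖⟪(WithLp.equiv 2 (Fin d → 𝕜)).symm fun i => u i * v (σ i), w⟫_𝕜‖ ≤
      ∑ i, descRearr (fun l => ‖v l‖) i * descRearr (fun l => ‖w l‖) i := by
  set x := (WithLp.equiv 2 (Fin d → 𝕜)).symm fun i => u i * v (σ i)
  have hx : (fun i => ‖x i‖) = (fun l => ‖v l‖) ∘ σ := by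
    ext i
    change ‖u i * v (σ i)‖ = _
    simp [hu]
  calc ‖⟪x, w⟫_𝕜‖ ≤ ∑ i, ‖x i‖ * ‖w i‖ := EuclideanSpace.norm_inner_le_sum_norm_mul_norm x w
    _ ≤ ∑ i, descRearr (fun i => ‖x i‖) i * descRearr (fun l => ‖w l‖) i :=
        sum_mul_le_sum_descRearr_mul _ _
    _ = _ := by rw [hx, descRearr_comp_perm]

lemma exists_norm_inner_eq_sum_descRearr_mul (v w : EuclideanSpace 𝕜 (Fin d)) :
    ∃ (σ : Equiv.Perm (Fin d)) (u : Fin d → 𝕜), (∀ i, ‖u i‖ = 1) ∧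
      ‖⟪(WithLp.equiv 2 (Fin d → 𝕜)).symm fun i => u i * v (σ i), w⟫_𝕜‖ =
        ∑ i, descRearr (fun l => ‖v l‖) i * descRearr (fun l => ‖w l‖) i := by
  obtain ⟨σ, hσ⟩ := exists_perm_sum_descRearr_mul_eq (fun l => ‖v l‖) (fun l => ‖w l‖)
  obtain ⟨u, hu, hinner⟩ := EuclideanSpace.exists_phases_inner_eq_sum_norm_mul_norm
    ((WithLp.equiv 2 (Fin d → 𝕜)).symm (v ∘ σ)) w
  refine ⟨σ, u, hu, ?_⟩
  rw [hσ]
  refine (congrArg norm hinner).trans ?_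
  rw [RCLike.norm_ofReal, abs_of_nonneg (by positivity)]
  rfl

end PhasePermutation

/-- For the group `Γ_d = S_d ⋉ (S¹)^d` of permutations and unit scalings of coordinates,
any subspace `W ⊆ ℂ^d` and any `v ∈ ℂ^d`:
`sup_{γ∈Γ_d} ‖proj_W (γ v)‖ = sup_{w ∈ S(W)} ⟨v^≻, w^≻⟩`. -/
theorem stmt10 (d : ℕ) (W : Submodule ℂ (EuclideanSpace ℂ (Fin d)))
    (v : EuclideanSpace ℂ (Fin d)) :
    sSup {r : ℝ | ∃ (σ : Equiv.Perm (Fin d)) (u : Fin d → ℂ), (∀ i, ‖u i‖ = 1) ∧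
        r = ‖W.orthogonalProjectionOnto
          ((WithLp.equiv 2 (Fin d → ℂ)).symm fun i => u i * v (σ i))‖}
    = sSup {r : ℝ | ∃ w ∈ W, ‖w‖ = 1 ∧
        r = ∑ i : Fin d, descRearr (fun l => ‖v l‖) i * descRearr (fun l => ‖w l‖) i} := by
  rcases eq_or_ne W ⊥ with rfl | hW
  · -- The left set is `{0}` and the right one is empty, with junk value `sSup ∅ = 0`.
    have hunit : ∃ u : Fin d → ℂ, ∀ i, ‖u i‖ = 1 := ⟨1, fun _ => by simp⟩
    simp [Submodule.orthogonalProjectionOnto_bot, hunit]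
  refine csSup_eq_csSup_of_forall_exists_le ?_ ?_
  · rintro _ ⟨σ, u, hu, rfl⟩
    obtain ⟨w, hwW, hw, hxw⟩ := W.exists_norm_eq_one_norm_inner_eq_norm_orthogonalProjectionOnto hW
      ((WithLp.equiv 2 (Fin d → ℂ)).symm fun i => u i * v (σ i))
    exact ⟨_, ⟨w, hwW, hw, rfl⟩, hxw ▸ norm_inner_le_sum_descRearr_mul v w σ hu⟩
  · rintro _ ⟨w, hwW, hw, rfl⟩
    obtain ⟨σ, u, hu, hvw⟩ := exists_norm_inner_eq_sum_descRearr_mul v w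
    refine ⟨_, ⟨σ, u, hu, rfl⟩, ?_⟩
    rw [← hvw, ← mul_one ‖W.orthogonalProjectionOnto _‖, ← hw]
    exact W.norm_inner_le_norm_orthogonalProjectionOnto_mul _ hwW
end

section
/- Let v_1, ..., v_{2k} ∈ C^d be orthonormal vectors, and let M be the d × 4k real matrix whose columns are (Re v_1, ..., Re v_{2k}, Im v_1, ..., Im v_{2k}). Then the 2k-th singular value of M satisfies s_{2k}(M) ≥ 1/√2. -/
open scoped Classical RealInnerProductSpace
open Matrix

/-- Cast a plain vector to `EuclideanSpace`. -/
def toE {n : ℕ} (x : Fin n → ℝ) : EuclideanSpace ℝ (Fin n) := WithLp.toLp 2 x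

lemma toE_coe {n : ℕ} (x : EuclideanSpace ℝ (Fin n)) : toE (⇑x) = x := rfl

lemma aux_symm {n : ℕ} (A : Matrix (Fin n) (Fin n) ℝ) (hA : A.IsHermitian)
    (x y : EuclideanSpace ℝ (Fin n)) :
    ⟪toE (A *ᵥ ⇑x), y⟫ = ⟪x, toE (A *ᵥ y)⟫ := by
  simp only [PiLp.inner_apply, RCLike.inner_apply, starRingEnd_apply, star_trivial,
    toE, PiLp.toLp_apply, Matrix.mulVec, dotProduct, Finset.sum_mul, Finset.mul_sum]
  rw [Finset.sum_comm]
  refine Finset.sum_congr rfl fun i _ => Finset.sum_congr rfl fun j _ => ?_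
  have h : A i j = A j i := by
    conv_lhs => rw [← hA]
    simp [Matrix.conjTranspose_apply]
  rw [h]; ring

lemma aux_count {n : ℕ} (A : Matrix (Fin n) (Fin n) ℝ) (hA : A.IsHermitian)
    (J : EuclideanSpace ℝ (Fin n) →ₗ[ℝ] EuclideanSpace ℝ (Fin n))
    (hJi : ∀ x y : EuclideanSpace ℝ (Fin n), ⟪J x, J y⟫ = ⟪x, y⟫)
    (hJA : ∀ x : EuclideanSpace ℝ (Fin n), A *ᵥ ⇑(J x) = ⇑(J x) - ⇑(J (toE (A *ᵥ ⇑x)))) :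
    n ≤ 2 * (Finset.univ.filter fun j : Fin n => (1 : ℝ) / 2 ≤ hA.eigenvalues j).card := by
  classical
  set lam := hA.eigenvalues with hlam
  set e := hA.eigenvectorBasis with he
  set T : Finset (Fin n) := Finset.univ.filter (fun j => ¬ ((1:ℝ)/2 ≤ lam j)) with hT
  have hcard : (Finset.univ.filter fun j : Fin n => (1:ℝ)/2 ≤ lam j).card + T.card = n := by
    rw [hT, Finset.card_filter_add_card_filter_not, Finset.card_univ, Fintype.card_fin]
  -- eigen equation for J of eigenvectors
  have hEig : ∀ l : Fin n, A *ᵥ ⇑(J (e l)) = (1 - lam l) • ⇑(J (e l)) := by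
    intro l
    rw [hJA]
    have h1 : A *ᵥ ⇑(e l) = lam l • ⇑(e l) := hA.mulVec_eigenvectorBasis l
    rw [h1]
    have h2 : toE (lam l • ⇑(e l)) = lam l • (e l) := rfl
    rw [h2, LinearMap.map_smul]
    have h3 : ⇑(lam l • J (e l)) = lam l • ⇑(J (e l)) := rfl
    rw [h3, sub_smul, one_smul]
  have hperp : ∀ j l : Fin n, j ∈ T → l ∈ T → ⟪e j, J (e l)⟫ = 0 := by
    intro j l hj hl
    have hlj : lam j < 1/2 := by
      rw [hT] at hj; simpa [not_le] using (Finset.mem_filter.mp hj).2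
    have hll : lam l < 1/2 := by
      rw [hT] at hl; simpa [not_le] using (Finset.mem_filter.mp hl).2
    have h1 : ⟪toE (A *ᵥ ⇑(e j)), J (e l)⟫ = ⟪e j, toE (A *ᵥ ⇑(J (e l)))⟫ := by
      have := aux_symm A hA (e j) (J (e l))
      simpa [toE_coe] using this
    have h2 : toE (A *ᵥ ⇑(e j)) = lam j • e j := by
      rw [hA.mulVec_eigenvectorBasis j]; rfl
    have h3 : toE (A *ᵥ ⇑(J (e l))) = (1 - lam l) • J (e l) := by
      rw [hEig l]; rfl
    rw [h2, h3, real_inner_smul_left, real_inner_smul_right] at h1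
    have h4 : (lam j - (1 - lam l)) * ⟪e j, J (e l)⟫ = 0 := by
      rw [sub_mul]; rw [h1]; ring
    rcases mul_eq_zero.mp h4 with h5 | h5
    · exfalso; nlinarith
    · exact h5
  have hJnorm : ∀ j l : Fin n, ⟪J (e j), J (e l)⟫ = if j = l then 1 else 0 := by
    intro j l
    rw [hJi]
    exact orthonormal_iff_ite.mp e.orthonormal j l
  set F : (↥T ⊕ ↥T) → EuclideanSpace ℝ (Fin n) :=
    Sum.elim (fun j => e j.1) (fun j => J (e j.1)) with hF
  have horthF : Orthonormal ℝ F := by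
    rw [orthonormal_iff_ite]
    have hee := orthonormal_iff_ite.mp e.orthonormal
    rintro (⟨j,hj⟩|⟨j,hj⟩) (⟨l,hl⟩|⟨l,hl⟩)
    · simp only [hF, Sum.elim_inl]
      rw [hee j l]
      by_cases h : j = l <;> simp [h]
    · simp only [hF, Sum.elim_inl, Sum.elim_inr]
      simp [hperp j l hj hl]
    · simp only [hF, Sum.elim_inl, Sum.elim_inr]
      rw [real_inner_comm]
      simp [hperp l j hl hj]
    · simp only [hF, Sum.elim_inr]
      rw [hJnorm j l]
      by_cases h : j = l <;> simp [h]
  have hli := horthF.linearIndependent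
  have hcard2 := hli.fintype_card_le_finrank
  rw [finrank_euclideanSpace_fin] at hcard2
  simp only [Fintype.card_sum, Fintype.card_coe] at hcard2
  omega

/-- Let `v 1, …, v (2k)` be orthonormal vectors in `ℂ^d` and let `M` be the real `d × 4k`
matrix with columns `Re v 1, …, Re v (2k), Im v 1, …, Im v (2k)`. Then the `2k`-th singular
value of `M` is at least `1/√2`; equivalently, at least `2k` of the eigenvalues of `MᵀM`
are at least `1/2`. -/
theorem stmt14 (d k : ℕ) (hk : 1 ≤ k)
    (v : Fin (2 * k) → EuclideanSpace ℂ (Fin d)) (hv : Orthonormal ℂ v)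
    (M : Matrix (Fin d) (Fin (4 * k)) ℝ)
    (hM : ∀ (i : Fin d) (j : Fin (4 * k)),
      M i j = if h : (j : ℕ) < 2 * k then (v ⟨j, h⟩ i).re
        else (v ⟨(j : ℕ) - 2 * k, by have := j.2; omega⟩ i).im)
    (hA : (M.transpose * M).IsHermitian) :
    2 * k ≤ (Finset.univ.filter fun j : Fin (4 * k) => (1 : ℝ) / 2 ≤ hA.eigenvalues j).card := by
  have horth : ∀ a b : Fin (2*k),
      (∑ i, (starRingEnd ℂ) (v a i) * v b i) = if a = b then 1 else 0 := by
    intro a b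
    have h := orthonormal_iff_ite.mp hv a b
    rw [PiLp.inner_apply] at h
    simpa only [RCLike.inner_apply, mul_comm] using h
  have hre : ∀ a b : Fin (2*k),
      (∑ i, ((v a i).re * (v b i).re + (v a i).im * (v b i).im)) = if a = b then 1 else 0 := by
    intro a b
    have h2 := congrArg Complex.re (horth a b)
    simp only [Complex.re_sum, Complex.mul_re, Complex.conj_re, Complex.conj_im, neg_mul,
      sub_neg_eq_add, apply_ite Complex.re, Complex.one_re, Complex.zero_re] at h2
    exact h2
  have him : ∀ a b : Fin (2*k),
      (∑ i, ((v a i).re * (v b i).im - (v a i).im * (v b i).re)) = 0 := by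
    intro a b
    have h2 := congrArg Complex.im (horth a b)
    simp only [Complex.im_sum, Complex.mul_im, Complex.conj_re, Complex.conj_im, neg_mul,
      apply_ite Complex.im, Complex.one_im, Complex.zero_im, ite_self] at h2
    calc (∑ i, ((v a i).re * (v b i).im - (v a i).im * (v b i).re))
        = ∑ i, ((v a i).re * (v b i).im + -((v a i).im * (v b i).re)) := by
          refine Finset.sum_congr rfl fun i _ => by ring
      _ = 0 := h2
  -- the swap permutation and sign
  set sg : Fin (4*k) → ℝ := fun p => if (p:ℕ) < 2*k then -1 else 1 with hsg
  set sw : Fin (4*k) → Fin (4*k) := fun p =>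
    if h : (p:ℕ) < 2*k then ⟨(p:ℕ)+2*k, by omega⟩
    else ⟨(p:ℕ)-2*k, by have := p.2; omega⟩ with hsw
  have hs2 : ∀ p, sg p * sg p = 1 := by
    intro p; by_cases h : (p:ℕ) < 2*k <;> simp [hsg, h]
  have hswa : ∀ (p : Fin (4*k)), (p:ℕ) < 2*k → ((sw p : Fin (4*k)) : ℕ) = (p:ℕ) + 2*k := by
    intro p hp; simp only [hsw]; rw [dif_pos hp]
  have hswb : ∀ (p : Fin (4*k)), ¬ (p:ℕ) < 2*k → ((sw p : Fin (4*k)) : ℕ) = (p:ℕ) - 2*k := by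
    intro p hp; simp only [hsw]; rw [dif_neg hp]
  have hswsw : Function.Involutive sw := by
    intro p
    apply Fin.ext
    by_cases h : (p:ℕ) < 2*k
    · rw [hswb _ (by rw [hswa p h]; omega), hswa p h]; omega
    · have := p.2
      rw [hswa _ (by rw [hswb p h]; omega), hswb p h]; omega
  set swe : Equiv.Perm (Fin (4*k)) := hswsw.toPerm with hswe
  have hswe_app : ∀ p, swe p = sw p := fun p => rfl
  have hMre : ∀ (i : Fin d) (p : Fin (4*k)) (a : Fin (2*k)), (p:ℕ) = (a:ℕ) →
      M i p = (v a i).re := by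
    intro i p a hpa
    have hp : (p:ℕ) < 2*k := by rw [hpa]; exact a.2
    rw [hM, dif_pos hp]
    simp only [hpa, Fin.eta]
  have hMim : ∀ (i : Fin d) (p : Fin (4*k)) (a : Fin (2*k)), (p:ℕ) = (a:ℕ) + 2*k →
      M i p = (v a i).im := by
    intro i p a hpa
    have hp : ¬ (p:ℕ) < 2*k := by omega
    rw [hM, dif_neg hp]
    have h5 : (p:ℕ) - 2*k = (a:ℕ) := by omega
    simp only [h5, Fin.eta]
  have hApq : ∀ a b : Fin (4*k), (M.transpose * M) a b = ∑ i, M i a * M i b := by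
    intro a b; rw [Matrix.mul_apply]; simp [Matrix.transpose_apply]
  have hK : ∀ p q : Fin (4*k),
      (M.transpose * M) p q + sg p * sg q * (M.transpose * M) (sw p) (sw q)
        = if p = q then 1 else 0 := by
    intro p q
    have hp2 := p.2
    have hq2 := q.2
    by_cases hp : (p:ℕ) < 2*k <;> by_cases hq : (q:ℕ) < 2*k
    · -- both < 2k
      set a : Fin (2*k) := ⟨(p:ℕ), hp⟩ with ha
      set b : Fin (2*k) := ⟨(q:ℕ), hq⟩ with hb
      have hsgn : sg p * sg q = 1 := by simp [hsg, hp, hq]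
      rw [hApq, hApq, hsgn, one_mul, ← Finset.sum_add_distrib]
      calc (∑ i, (M i p * M i q + M i (sw p) * M i (sw q)))
          = ∑ i, ((v a i).re * (v b i).re + (v a i).im * (v b i).im) :=
            Finset.sum_congr rfl fun i _ => by
              rw [hMre i p a rfl, hMre i q b rfl,
                hMim i (sw p) a (by rw [hswa p hp]), hMim i (sw q) b (by rw [hswa q hq])]
        _ = if a = b then 1 else 0 := hre a b
        _ = if p = q then 1 else 0 := by
            have hiff : a = b ↔ p = q := by
              rw [Fin.ext_iff, Fin.ext_iff]
            rw [if_congr hiff rfl rfl]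
    · -- p < 2k ≤ q
      set a : Fin (2*k) := ⟨(p:ℕ), hp⟩ with ha
      set b : Fin (2*k) := ⟨(q:ℕ) - 2*k, by omega⟩ with hb
      have hbv : (q:ℕ) = (b:ℕ) + 2*k := by simp only [hb]; omega
      have hsgn : sg p * sg q = -1 := by simp [hsg, hp, hq]
      rw [hApq, hApq, hsgn, neg_one_mul, ← sub_eq_add_neg, ← Finset.sum_sub_distrib,
        if_neg (by intro h; rw [h] at hp; exact hq hp)]
      calc (∑ i, (M i p * M i q - M i (sw p) * M i (sw q)))
          = ∑ i, ((v a i).re * (v b i).im - (v a i).im * (v b i).re) :=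
            Finset.sum_congr rfl fun i _ => by
              rw [hMre i p a rfl, hMim i q b hbv,
                hMim i (sw p) a (by rw [hswa p hp]),
                hMre i (sw q) b (by rw [hswb q hq])]
        _ = 0 := him a b
    · -- q < 2k ≤ p
      set a : Fin (2*k) := ⟨(p:ℕ) - 2*k, by omega⟩ with ha
      set b : Fin (2*k) := ⟨(q:ℕ), hq⟩ with hb
      have hav : (p:ℕ) = (a:ℕ) + 2*k := by simp only [ha]; omega
      have hsgn : sg p * sg q = -1 := by simp [hsg, hp, hq]
      rw [hApq, hApq, hsgn, neg_one_mul, ← sub_eq_add_neg, ← Finset.sum_sub_distrib,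
        if_neg (by intro h; rw [← h] at hq; exact hp hq)]
      calc (∑ i, (M i p * M i q - M i (sw p) * M i (sw q)))
          = ∑ i, -((v a i).re * (v b i).im - (v a i).im * (v b i).re) :=
            Finset.sum_congr rfl fun i _ => by
              rw [hMim i p a hav, hMre i q b rfl,
                hMre i (sw p) a (by rw [hswb p hp]),
                hMim i (sw q) b (by rw [hswa q hq])]
              ring
        _ = -(∑ i, ((v a i).re * (v b i).im - (v a i).im * (v b i).re)) := by
              rw [Finset.sum_neg_distrib]
        _ = 0 := by rw [him a b, neg_zero]
    · -- both ≥ 2k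
      set a : Fin (2*k) := ⟨(p:ℕ) - 2*k, by omega⟩ with ha
      set b : Fin (2*k) := ⟨(q:ℕ) - 2*k, by omega⟩ with hb
      have hav : (p:ℕ) = (a:ℕ) + 2*k := by simp only [ha]; omega
      have hbv : (q:ℕ) = (b:ℕ) + 2*k := by simp only [hb]; omega
      have hsgn : sg p * sg q = 1 := by simp [hsg, hp, hq]
      rw [hApq, hApq, hsgn, one_mul, ← Finset.sum_add_distrib]
      calc (∑ i, (M i p * M i q + M i (sw p) * M i (sw q)))
          = ∑ i, ((v a i).re * (v b i).re + (v a i).im * (v b i).im) :=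
            Finset.sum_congr rfl fun i _ => by
              rw [hMim i p a hav, hMim i q b hbv,
                hMre i (sw p) a (by rw [hswb p hp]),
                hMre i (sw q) b (by rw [hswb q hq])]
              ring
        _ = if a = b then 1 else 0 := hre a b
        _ = if p = q then 1 else 0 := by
            have hiff : a = b ↔ p = q := by
              rw [Fin.ext_iff, Fin.ext_iff]
              have hav2 : (a:ℕ) = (p:ℕ) - 2*k := rfl
              have hbv2 : (b:ℕ) = (q:ℕ) - 2*k := rfl
              rw [hav2, hbv2]
              omega
            rw [if_congr hiff rfl rfl]
  -- the linear map J
  set J : EuclideanSpace ℝ (Fin (4*k)) →ₗ[ℝ] EuclideanSpace ℝ (Fin (4*k)) :=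
    { toFun := fun x => toE (fun i => sg i * x (sw i)),
      map_add' := by
        intro x y
        ext i
        show sg i * (x + y) (sw i) = sg i * x (sw i) + sg i * y (sw i)
        rw [PiLp.add_apply]
        ring
      map_smul' := by
        intro c x
        ext i
        show sg i * (c • x) (sw i) = c * (sg i * x (sw i))
        rw [PiLp.smul_apply, smul_eq_mul]
        ring } with hJ
  have hJapp : ∀ (x : EuclideanSpace ℝ (Fin (4*k))) (i : Fin (4*k)),
      J x i = sg i * x (sw i) := fun x i => rfl
  have hJi : ∀ x y : EuclideanSpace ℝ (Fin (4*k)), ⟪J x, J y⟫ = ⟪x, y⟫ := by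
    intro x y
    simp only [PiLp.inner_apply, RCLike.inner_apply, starRingEnd_apply, star_trivial]
    simp only [mul_comm ((J y).ofLp _) ((J x).ofLp _), mul_comm (y.ofLp _) (x.ofLp _)]
    have h1 : ∀ i, (J x) i * (J y) i = (fun j => x j * y j) (swe i) := by
      intro i
      show (sg i * x (sw i)) * (sg i * y (sw i)) = x (swe i) * y (swe i)
      rw [hswe_app]
      calc (sg i * x (sw i)) * (sg i * y (sw i))
          = (sg i * sg i) * (x (sw i) * y (sw i)) := by ring
        _ = x (sw i) * y (sw i) := by rw [hs2 i, one_mul]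
    rw [Finset.sum_congr rfl fun i _ => h1 i]
    exact Equiv.sum_comp swe (fun j => x j * y j)
  have hJA : ∀ x : EuclideanSpace ℝ (Fin (4*k)),
      (M.transpose * M) *ᵥ ⇑(J x) = ⇑(J x) - ⇑(J (toE ((M.transpose * M) *ᵥ ⇑x))) := by
    intro x
    funext i
    change (∑ q, (M.transpose * M) i q * (sg q * x (sw q)))
      = sg i * x (sw i) - sg i * (∑ q, (M.transpose * M) (sw i) q * x q)
    have h1 : (∑ q, (M.transpose * M) (sw i) q * x q)
        = ∑ q, (M.transpose * M) (sw i) (sw q) * x (sw q) := by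
      rw [← Equiv.sum_comp swe fun q => (M.transpose * M) (sw i) q * x q]
      exact Finset.sum_congr rfl fun q _ => by rw [hswe_app]
    rw [h1, Finset.mul_sum]
    have h2 : sg i * x (sw i) = ∑ q, (if q = i then sg i * x (sw i) else 0) := by
      rw [Finset.sum_ite_eq' Finset.univ i (fun _ => sg i * x (sw i))]
      simp
    rw [h2, ← Finset.sum_sub_distrib]
    refine Finset.sum_congr rfl fun q _ => ?_
    by_cases hiq : q = i
    · subst hiq
      rw [if_pos rfl]
      have hK' := hK q q
      rw [if_pos rfl] at hK'
      linear_combination (sg q * x (sw q)) * hK'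
        - (sg q * ((M.transpose * M) (sw q) (sw q)) * x (sw q)) * hs2 q
    · rw [if_neg hiq]
      have hK' := hK i q
      rw [if_neg (fun h => hiq h.symm)] at hK'
      linear_combination (sg q * x (sw q)) * hK'
        - (sg i * ((M.transpose * M) (sw i) (sw q)) * x (sw q)) * hs2 q
  have hfin := aux_count (M.transpose * M) hA J hJi hJA
  omega
end
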